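/- Let p : ℂ² → ℝ³ be defined by p(z₁, z₂) = ((|z₁|² − |z₂|²)/2, Re(z₁z₂), Im(z₁z₂)). Then for all (z₁, z₂), (z₁', z₂') ∈ ℂ², one has p(z₁, z₂) = p(z₁', z₂') if and only if there exists λ ∈ ℂ with |λ| = 1 such that z₁' = λz₁ and z₂' = (conj λ)·z₂. -/

import Mathlib

/-- The Gibbons–Hawking projection `p : ℂ² → ℝ³`,
`p(z₁,z₂) = ((|z₁|²−|z₂|²)/2, Re(z₁z₂), Im(z₁z₂))`. -/
noncomputable def ghProj (z : ℂ × ℂ) : EuclideanSpace ℝ (Fin 3) :=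
  (WithLp.equiv 2 (Fin 3 → ℝ)).symm
    ![(‖z.1‖ ^ 2 - ‖z.2‖ ^ 2) / 2, (z.1 * z.2).re, (z.1 * z.2).im]

/-!
The fibre of `p` through `(z₁, z₂)` is cut out by `|z₁|² − |z₂|²` and `z₁z₂`. These two quantities
determine `|z₁|` and `|z₂|`, because `(|z₁|² + |z₂|²)² = (|z₁|² − |z₂|²)² + 4|z₁z₂|²`. Points with the
same moduli differ by unimodular factors `μ, ν` on the two coordinates, and equality of the products
forces `ν = μ⁻¹ = conj μ` unless a coordinate vanishes, in which case its factor can be chosen freely.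
-/

open ComplexConjugate

theorem ghProj_eq_ghProj_iff (z w : ℂ × ℂ) :
    ghProj z = ghProj w ↔
      ‖z.1‖ ^ 2 - ‖z.2‖ ^ 2 = ‖w.1‖ ^ 2 - ‖w.2‖ ^ 2 ∧ z.1 * z.2 = w.1 * w.2 := by
  rw [ghProj, ghProj, (WithLp.equiv 2 (Fin 3 → ℝ)).symm.injective.eq_iff]
  simp only [Matrix.vecCons_inj, and_true, Complex.ext_iff]
  rw [div_left_inj' two_ne_zero]

theorem eq_and_eq_of_sq_sub_sq_eq_of_mul_eq {a b c d : ℝ} (ha : 0 ≤ a) (hb : 0 ≤ b) (hc : 0 ≤ c)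
    (hd : 0 ≤ d) (hsub : a ^ 2 - b ^ 2 = c ^ 2 - d ^ 2) (hmul : a * b = c * d) :
    a = c ∧ b = d := by
  have hsum : a ^ 2 + b ^ 2 = c ^ 2 + d ^ 2 := by
    rw [← sq_eq_sq₀ (by positivity) (by positivity)]
    linear_combination (a ^ 2 - b ^ 2 + c ^ 2 - d ^ 2) * hsub + 4 * (a * b + c * d) * hmul
  rw [← sq_eq_sq₀ ha hc, ← sq_eq_sq₀ hb hd]
  constructor <;> linarith

namespace Complex

theorem exists_norm_eq_one_mul_of_norm_eq {z w : ℂ} (h : ‖w‖ = ‖z‖) :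
    ∃ μ : ℂ, ‖μ‖ = 1 ∧ w = μ * z := by
  rcases eq_or_ne z 0 with rfl | hz
  · exact ⟨1, norm_one, by simpa using h⟩
  · refine ⟨w / z, ?_, (div_mul_cancel₀ w hz).symm⟩
    rw [norm_div, h, div_self (norm_ne_zero_iff.mpr hz)]

theorem norm_eq_and_norm_eq_and_mul_eq_iff {z₁ z₂ w₁ w₂ : ℂ} :
    ‖w₁‖ = ‖z₁‖ ∧ ‖w₂‖ = ‖z₂‖ ∧ w₁ * w₂ = z₁ * z₂ ↔
      ∃ lam : ℂ, ‖lam‖ = 1 ∧ w₁ = lam * z₁ ∧ w₂ = conj lam * z₂ := by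
  constructor
  · rintro ⟨h₁, h₂, hmul⟩
    obtain ⟨μ, hμ, rfl⟩ := exists_norm_eq_one_mul_of_norm_eq h₁
    obtain ⟨ν, hν, rfl⟩ := exists_norm_eq_one_mul_of_norm_eq h₂
    rcases eq_or_ne z₁ 0 with rfl | hz₁
    · exact ⟨conj ν, by rwa [norm_conj], by simp, by rw [conj_conj]⟩
    rcases eq_or_ne z₂ 0 with rfl | hz₂
    · exact ⟨μ, hμ, rfl, by simp⟩
    have hμν : μ * ν = 1 :=
      mul_right_cancel₀ (mul_ne_zero hz₁ hz₂) (by linear_combination hmul)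
    refine ⟨μ, hμ, rfl, ?_⟩
    rw [← inv_eq_conj hμ, eq_inv_of_mul_eq_one_right hμν]
  · rintro ⟨lam, hlam, rfl, rfl⟩
    have hunit : conj lam * lam = 1 := by
      rw [← inv_eq_conj hlam, inv_mul_cancel₀ (norm_ne_zero_iff.mp (by simp [hlam]))]
    refine ⟨by simp [hlam], by simp [hlam], ?_⟩
    linear_combination (z₁ * z₂) * hunit

end Complex

/-- The fibres of the Gibbons–Hawking projection are exactly the orbits of the
circle action `(z₁, z₂) ↦ (λz₁, λ̄z₂)`, `|λ| = 1`. -/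
theorem ghProj_eq_iff (z₁ z₂ z₁' z₂' : ℂ) :
    ghProj (z₁, z₂) = ghProj (z₁', z₂') ↔
      ∃ lam : ℂ, ‖lam‖ = 1 ∧ z₁' = lam * z₁ ∧
        z₂' = (starRingEnd ℂ) lam * z₂ := by
  rw [ghProj_eq_ghProj_iff, ← Complex.norm_eq_and_norm_eq_and_mul_eq_iff]
  constructor
  · rintro ⟨hsub, hmul⟩
    have hnorm_mul : ‖z₁‖ * ‖z₂‖ = ‖z₁'‖ * ‖z₂'‖ := by
      simp only [← norm_mul, hmul]
    obtain ⟨h₁, h₂⟩ := eq_and_eq_of_sq_sub_sq_eq_of_mul_eq (norm_nonneg _) (norm_nonneg _)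
      (norm_nonneg _) (norm_nonneg _) hsub hnorm_mul
    exact ⟨h₁.symm, h₂.symm, hmul.symm⟩
  · rintro ⟨h₁, h₂, hmul⟩
    exact ⟨by rw [h₁, h₂], hmul.symm⟩
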